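/- arXiv:1911.08256 — 3 statements merged into one kernel-verified Lean document; each statement's English description precedes it below -/
import Mathlib

section
/- Let a > 0, let ξ : [0,a] → ℝ be absolutely continuous with ξ(0) = 0 and such that t ↦ ξ(t)/t is non-decreasing on (0,a], and let ψ : [0,a] → [0,∞) be non-increasing. Then ∫₀ᵃ ξ'(t) ψ(t) dt ≤ (ξ(a)/a) ∫₀ᵃ ψ(t) dt. -/
/-!
Put `c = ξ(a)/a`. Since `ξ(t)/t ≤ c`, the primitive `F(b) = ∫₀ᵇ (c - ξ') = c b - ξ(b)` of
`f = c - ξ'` is nonnegative on `[0, a]`, and the claim is `∫₀ᵃ f ψ ≥ 0`. By the layer-cake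
formula `ψ(t) = ∫₀^∞ 1[l < ψ(t)] dl` and Fubini, `∫₀ᵃ f ψ = ∫₀^∞ ∫_{ψ > l} f dl`; as `ψ` is
non-increasing, each superlevel set `{ψ > l}` is, up to an endpoint, an initial interval `(0, b]`,
so each inner integral is some `F(b) ≥ 0`.
-/

open MeasureTheory Set

variable {μ : Measure ℝ} {a b : ℝ}

theorem AntitoneOn.exists_antitone_eqOn_Icc {α β : Type*} [LinearOrder α] [Preorder β]
    {f : α → β} {a b : α} (hf : AntitoneOn f (Icc a b)) (hab : a ≤ b) :
    ∃ g : α → β, Antitone g ∧ EqOn g f (Icc a b) ∧ range g ⊆ f '' Icc a b :=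
  ⟨IccExtend hab (f ∘ (↑)), (antitoneOn_iff_antitone.1 hf).comp_monotone (monotone_projIcc hab),
    fun _ hx => IccExtend_of_mem hab _ hx, by
      rintro _ ⟨x, rfl⟩
      exact ⟨_, (projIcc a b hab x).2, rfl⟩⟩

theorem IsLowerSet.exists_inter_Ioc_ae_eq_Ioc [NullSingletonClass μ] {s : Set ℝ}
    (hs : IsLowerSet s) (hab : a ≤ b) : ∃ c ∈ Icc a b, (s ∩ Ioc a b : Set ℝ) =ᵐ[μ] Ioc a c := by
  set T := insert a (s ∩ Icc a b)
  have hTb : ∀ x ∈ T, x ≤ b := by rintro x (rfl | hx); exacts [hab, hx.2.2]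
  have hT : BddAbove T := ⟨b, hTb⟩
  have hTne : T.Nonempty := ⟨a, mem_insert _ _⟩
  refine ⟨sSup T, ⟨le_csSup hT (mem_insert _ _), csSup_le hTne hTb⟩, ?_⟩
  have hsub : s ∩ Ioc a b ⊆ Ioc a (sSup T) := fun t ht =>
    ⟨ht.2.1, le_csSup hT (mem_insert_of_mem _ ⟨ht.1, Ioc_subset_Icc_self ht.2⟩)⟩
  have hsup : Ioo a (sSup T) ⊆ s ∩ Ioc a b := by
    rintro t ⟨hat, htT⟩
    obtain ⟨u, hu | hu, htu⟩ := exists_lt_of_lt_csSup hTne htT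
    · exact absurd (hu ▸ htu) hat.not_gt
    · exact ⟨hs htu.le hu.1, hat, htu.le.trans hu.2.2⟩
  exact hsub.eventuallyLE.antisymm (Ioo_ae_eq_Ioc.symm.le.trans hsup.eventuallyLE)

theorem setIntegral_Ioi_indicator_Iio {x y : ℝ} (hy : 0 ≤ y) :
    ∫ l in Ioi (0 : ℝ), (Iio y).indicator (fun _ => x) l = x * y := by
  rw [integral_indicator measurableSet_Iio, Measure.restrict_restrict measurableSet_Iio,
    Iio_inter_Ioi, setIntegral_const, Real.volume_real_Ioo_of_le hy, sub_zero, smul_eq_mul,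
    mul_comm]

theorem Antitone.integrable_indicator_Iio_prod [SFinite μ] {f ψ : ℝ → ℝ} (hψ : Antitone ψ)
    (hf : IntegrableOn f (Ioc a b) μ) :
    Integrable (Function.uncurry fun t l => (Iio (ψ t)).indicator (fun _ => f t) l)
      ((μ.restrict (Ioc a b)).prod (volume.restrict (Ioi 0))) := by
  have hmeas : MeasurableSet {q : ℝ × ℝ | q.2 < ψ q.1} :=
    measurableSet_lt measurable_snd (hψ.measurable.comp measurable_fst)
  refine (hf.abs.mul_prod (g := (Iio (ψ a)).indicator 1) ?_).mono'
    ((hf.aestronglyMeasurable.comp_fst).indicator hmeas) ?_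
  · rw [integrable_indicator_iff measurableSet_Iio, IntegrableOn,
      Measure.restrict_restrict measurableSet_Iio, Iio_inter_Ioi]
    exact integrableOn_const (by simp)
  rw [Measure.prod_restrict]
  filter_upwards [ae_restrict_mem (measurableSet_Ioc.prod measurableSet_Ioi)] with q hq
  show ‖(Iio (ψ q.1)).indicator (fun _ => f q.1) q.2‖ ≤ |f q.1| * (Iio (ψ a)).indicator 1 q.2
  by_cases hq' : q.2 < ψ q.1
  · simp [hq', hq'.trans_le (hψ hq.1.1.le)]
  · simp only [mem_Iio, hq', not_false_eq_true, indicator_of_notMem, norm_zero]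
    exact mul_nonneg (abs_nonneg _) (indicator_nonneg (fun _ _ => zero_le_one) _)

theorem intervalIntegral_mul_antitone_nonneg [NullSingletonClass μ] [SFinite μ] {f ψ : ℝ → ℝ}
    (hab : a ≤ b) (hf : IntervalIntegrable f μ a b)
    (hF : ∀ c ∈ Icc a b, 0 ≤ ∫ t in a..c, f t ∂μ) (hψ : Antitone ψ) (hψ0 : ∀ t, 0 ≤ ψ t) :
    0 ≤ ∫ t in a..b, f t * ψ t ∂μ := by
  rw [intervalIntegrable_iff_integrableOn_Ioc_of_le hab] at hf
  rw [intervalIntegral.integral_of_le hab]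
  let G (t l : ℝ) : ℝ := (Iio (ψ t)).indicator (fun _ => f t) l
  have hG_l : ∀ l, 0 ≤ ∫ t in Ioc a b, G t l ∂μ := by
    intro l
    have hl : MeasurableSet {t | l < ψ t} := measurableSet_lt measurable_const hψ.measurable
    have hlower : IsLowerSet {t | l < ψ t} := fun s t hts hs => hs.trans_le (hψ hts)
    obtain ⟨c, hc, hc_ae⟩ := hlower.exists_inter_Ioc_ae_eq_Ioc (μ := μ) hab
    have := hF c hc
    rwa [intervalIntegral.integral_of_le hc.1, ← setIntegral_congr_set hc_ae,
      ← Measure.restrict_restrict hl, ← integral_indicator hl] at this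
  calc (0 : ℝ) ≤ ∫ l in Ioi 0, ∫ t in Ioc a b, G t l ∂μ := integral_nonneg hG_l
    _ = ∫ t in Ioc a b, (∫ l in Ioi 0, G t l) ∂μ :=
      (integral_integral_swap (hψ.integrable_indicator_Iio_prod hf)).symm
    _ = ∫ t in Ioc a b, f t * ψ t ∂μ := by simp_rw [G, setIntegral_Ioi_indicator_Iio (hψ0 _)]

theorem IntervalIntegrable.mul_antitone {f ψ : ℝ → ℝ} (hf : IntervalIntegrable f μ a b)
    (hψ : Antitone ψ) : IntervalIntegrable (fun t => f t * ψ t) μ a b := by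
  rw [intervalIntegrable_iff] at hf ⊢
  refine hf.mul_bdd (c := max |ψ (max a b)| |ψ (min a b)|) hψ.measurable.aestronglyMeasurable ?_
  filter_upwards [ae_restrict_mem measurableSet_uIoc] with t ht
  exact abs_le_max_abs_abs (hψ ht.2) (hψ ht.1.le)

/-- Let `a > 0`, let `ξ : [0,a] → ℝ` be absolutely continuous (encoded via an
integrable a.e.-derivative `ξ'` satisfying the fundamental theorem of calculus) with `ξ 0 = 0`,
such that `t ↦ ξ t / t` is non-decreasing on `(0, a]`, and let `ψ : [0,a] → [0,∞)` be
non-increasing. Then `∫₀ᵃ ξ'(t) ψ(t) dt ≤ (ξ(a)/a) ∫₀ᵃ ψ(t) dt`. -/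
theorem stmt_0 (a : ℝ) (ha : 0 < a) (ξ ξ' ψ : ℝ → ℝ)
    (hξ'int : IntervalIntegrable ξ' volume 0 a)
    (hFTC : ∀ t ∈ Set.Icc (0 : ℝ) a, ξ t = ∫ s in (0 : ℝ)..t, ξ' s)
    (hξ0 : ξ 0 = 0)
    (hmono : ∀ s t : ℝ, 0 < s → s ≤ t → t ≤ a → ξ s / s ≤ ξ t / t)
    (hψ0 : ∀ t ∈ Set.Icc (0 : ℝ) a, 0 ≤ ψ t)
    (hψanti : ∀ s t : ℝ, 0 ≤ s → s ≤ t → t ≤ a → ψ t ≤ ψ s) :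
    (∫ t in (0 : ℝ)..a, ξ' t * ψ t) ≤ ξ a / a * ∫ t in (0 : ℝ)..a, ψ t := by
  obtain ⟨φ, hφ, hφψ, hφ_range⟩ := AntitoneOn.exists_antitone_eqOn_Icc
    (fun s hs t ht hst => hψanti s t hs.1 hst ht.2) ha.le
  have hφ0 (t : ℝ) : 0 ≤ φ t := by
    obtain ⟨s, hs, hst⟩ := hφ_range (mem_range_self t)
    exact hst ▸ hψ0 s hs
  have hψφ : EqOn ψ φ (uIcc 0 a) := by rw [uIcc_of_le ha.le]; exact hφψ.symm
  rw [intervalIntegral.integral_congr (fun t ht => congrArg (ξ' t * ·) (hψφ ht)),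
    intervalIntegral.integral_congr hψφ]
  set c := ξ a / a
  have hF : ∀ b ∈ Icc 0 a, 0 ≤ ∫ t in 0..b, (c - ξ' t) := by
    intro b hb
    have hξ'b : IntervalIntegrable ξ' volume 0 b :=
      hξ'int.mono_set (uIcc_subset_uIcc left_mem_uIcc (by rw [uIcc_of_le ha.le]; exact hb))
    rw [intervalIntegral.integral_sub intervalIntegrable_const hξ'b,
      intervalIntegral.integral_const, ← hFTC b hb, smul_eq_mul, sub_zero]
    rcases hb.1.eq_or_lt with rfl | hb0
    · simp [hξ0]
    · have := (div_le_iff₀ hb0).1 (hmono b a hb0 hb.2 le_rfl)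
      linarith
  have key := intervalIntegral_mul_antitone_nonneg ha.le
    (intervalIntegrable_const.sub hξ'int) hF hφ hφ0
  simp_rw [sub_mul] at key
  rw [intervalIntegral.integral_sub (hφ.intervalIntegrable.const_mul c)
    (hξ'int.mul_antitone hφ), intervalIntegral.integral_const_mul] at key
  linarith
end

section
/- Let Ω ⊂ ℝ^N be an open bounded convex set of class C¹ containing the ball B_R(0), and suppose ⟨x, ν_Ω(x)⟩ = R for every x ∈ ∂Ω. Then Ω = B_R(0). -/
open MeasureTheory
open scoped RealInnerProductSpace

/-! A point `x` of `closure Ω` farthest from the origin lies on `∂Ω`, and `x / ‖x‖` is an outer unit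
normal there, because `Ω ⊆ closedBall 0 ‖x‖`. The hypothesis then gives
`‖x‖ = ⟪x, x / ‖x‖⟫ = R`, so `Ω ⊆ closedBall 0 R`, and being open, `Ω ⊆ ball 0 R`. -/

theorem IsOpen.subset_ball_of_subset_closedBall {E : Type*} [SeminormedAddCommGroup E]
    [NormedSpace ℝ E] {s : Set E} (hs : IsOpen s) {c : E} {r : ℝ} (hr : r ≠ 0)
    (h : s ⊆ Metric.closedBall c r) : s ⊆ Metric.ball c r :=
  interior_closedBall c hr ▸ (hs.subset_interior_iff.2 h)

theorem mem_frontier_of_forall_norm_le {E : Type*} [SeminormedAddCommGroup E] [NormedSpace ℝ E]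
    {s : Set E} (hs : IsOpen s) {x : E} (hx : x ∈ closure s) (hmax : ∀ y ∈ s, ‖y‖ ≤ ‖x‖)
    (hx0 : ‖x‖ ≠ 0) : x ∈ frontier s := by
  refine hs.frontier_eq ▸ ⟨hx, fun hxs => ?_⟩
  have hball : s ⊆ Metric.ball 0 ‖x‖ := hs.subset_ball_of_subset_closedBall hx0
    fun y hy => mem_closedBall_zero_iff.2 (hmax y hy)
  exact (mem_ball_zero_iff.1 (hball hxs)).false

theorem real_inner_sub_inv_norm_smul_nonpos {F : Type*} [SeminormedAddCommGroup F]
    [InnerProductSpace ℝ F] {x y : F} (h : ‖y‖ ≤ ‖x‖) : ⟪y - x, ‖x‖⁻¹ • x⟫ ≤ 0 := by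
  rw [real_inner_smul_right, inner_sub_left, real_inner_self_eq_norm_sq]
  have hyx : ⟪y, x⟫ ≤ ‖x‖ ^ 2 :=
    (real_inner_le_norm y x).trans (by nlinarith [norm_nonneg x])
  exact mul_nonpos_of_nonneg_of_nonpos (inv_nonneg.2 (norm_nonneg x)) (by linarith)

theorem real_inner_inv_norm_smul_self {F : Type*} [SeminormedAddCommGroup F]
    [InnerProductSpace ℝ F] (x : F) : ⟪x, ‖x‖⁻¹ • x⟫ = ‖x‖ := by
  rw [real_inner_smul_right, real_inner_self_eq_norm_sq]
  rcases eq_or_ne ‖x‖ 0 with h | h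
  · simp [h]
  · field_simp

theorem stmt_2_general (N : ℕ) (Ω : Set (EuclideanSpace ℝ (Fin N))) (R : ℝ)
    (hΩopen : IsOpen Ω) (hΩbdd : Bornology.IsBounded Ω)
    (hR : 0 < R) (hball : Metric.ball (0 : EuclideanSpace ℝ (Fin N)) R ⊆ Ω)
    (heq : ∀ x ∈ frontier Ω, ∀ ν : EuclideanSpace ℝ (Fin N),
      (‖ν‖ = 1 ∧ ∀ y ∈ Ω, ⟪y - x, ν⟫ ≤ 0) → ⟪x, ν⟫ = R) :
    Ω = Metric.ball (0 : EuclideanSpace ℝ (Fin N)) R := by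
  have hne : Ω.Nonempty := ⟨0, hball (Metric.mem_ball_self hR)⟩
  obtain ⟨x, hxΩ, hxmax⟩ :=
    hΩbdd.isCompact_closure.exists_isMaxOn hne.closure continuous_norm.continuousOn
  have hmax : ∀ y ∈ Ω, ‖y‖ ≤ ‖x‖ := fun y hy => hxmax (subset_closure hy)
  have hxR : ‖x‖ ≤ R := by
    rcases (norm_nonneg x).eq_or_lt with h0 | hpos
    · linarith
    have hν : ‖‖x‖⁻¹ • x‖ = 1 := by
      simpa using norm_smul_inv_norm (𝕜 := ℝ) (norm_pos_iff.1 hpos)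
    have := heq x (mem_frontier_of_forall_norm_le hΩopen hxΩ hmax hpos.ne') _
      ⟨hν, fun y hy => real_inner_sub_inv_norm_smul_nonpos (hmax y hy)⟩
    rw [real_inner_inv_norm_smul_self] at this
    exact this.le
  refine (hΩopen.subset_ball_of_subset_closedBall hR.ne' fun y hy => ?_).antisymm hball
  exact mem_closedBall_zero_iff.2 ((hmax y hy).trans hxR)

/-- Let `Ω ⊂ ℝ^N` be an open bounded convex set of class `C¹` (encoded by the
existence of a unique outer unit normal at every boundary point), containing the ball `B_R(0)`,
and suppose `⟪x, ν_Ω(x)⟫ = R` for every `x ∈ ∂Ω`. Then `Ω = B_R(0)`. -/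
theorem stmt_2 (N : ℕ) (Ω : Set (EuclideanSpace ℝ (Fin N))) (R : ℝ)
    (hΩopen : IsOpen Ω) (hΩbdd : Bornology.IsBounded Ω) (hΩconv : Convex ℝ Ω)
    (hR : 0 < R) (hball : Metric.ball (0 : EuclideanSpace ℝ (Fin N)) R ⊆ Ω)
    (hC1 : ∀ x ∈ frontier Ω, ∃! ν : EuclideanSpace ℝ (Fin N),
      ‖ν‖ = 1 ∧ ∀ y ∈ Ω, ⟪y - x, ν⟫ ≤ 0)
    (heq : ∀ x ∈ frontier Ω, ∀ ν : EuclideanSpace ℝ (Fin N),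
      (‖ν‖ = 1 ∧ ∀ y ∈ Ω, ⟪y - x, ν⟫ ≤ 0) → ⟪x, ν⟫ = R) :
    Ω = Metric.ball (0 : EuclideanSpace ℝ (Fin N)) R :=
  stmt_2_general N Ω R hΩopen hΩbdd hR hball heq
end

section
/- Let 1 ≤ q < 2 and let Ω ⊂ ℝ^N be an open bounded convex set containing the ball B_{R_Ω}(0), where R_Ω is the inradius. Let f : [0,1] → [0,∞) be C¹, decreasing, with f(1) = 0, and let j_Ω be the Minkowski functional of Ω. Then ∫_Ω f(j_Ω(x))^q dx = N |Ω| ∫₀¹ f(t)^q t^{N-1} dt and ∫_Ω |∇(f ∘ j_Ω)|² dx ≤ (N|Ω|/R_Ω²) ∫₀¹ |f'(t)|² t^{N-1} dt. -/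
open MeasureTheory

/-- The inradius of a set: the radius of the largest open ball contained in it. -/
noncomputable def inradius {N : ℕ} (Ω : Set (EuclideanSpace ℝ (Fin N))) : ℝ :=
  sSup {r : ℝ | ∃ x : EuclideanSpace ℝ (Fin N), Metric.ball x r ⊆ Ω}

open Set Metric Module
open scoped NNReal ENNReal Pointwise

/-! The sublevel sets of the gauge are dilates of `Ω`, `{j_Ω < r} = r • Ω`, so
`|{j_Ω < r}| = r ^ N |Ω|`: the push-forward of Lebesgue measure on `Ω` under `j_Ω` has density
`N |Ω| t ^ (N - 1)` on `(0, 1)`. This gives the first identity for any integrand, and the second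
after the a.e. bound `|∇(f ∘ j_Ω)| ≤ |f'(j_Ω)| / R_Ω`, which holds because `j_Ω` is
`1 / R_Ω`-Lipschitz once `B_{R_Ω}(0) ⊆ Ω` (Rademacher). -/

noncomputable def radialMeasure (d : ℕ) : Measure ℝ :=
  (volume.restrict (Ioo 0 1)).withDensity fun t => ENNReal.ofReal (d * t ^ (d - 1))

theorem lintegral_Ioo_natCast_mul_pow_pred {d : ℕ} (hd : 0 < d) {b : ℝ} (hb : 0 ≤ b) :
    ∫⁻ t in Ioo 0 b, ENNReal.ofReal (d * t ^ (d - 1)) = ENNReal.ofReal (b ^ d) := by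
  rw [Measure.restrict_congr_set Ioo_ae_eq_Ioc, ← ofReal_integral_eq_lintegral_ofReal,
    ← intervalIntegral.integral_of_le hb]
  · congr 1
    rw [intervalIntegral.integral_const_mul, integral_pow, Nat.sub_add_cancel hd,
      Nat.cast_pred hd, zero_pow hd.ne', sub_zero, sub_add_cancel,
      mul_div_cancel₀ _ (Nat.cast_ne_zero.2 hd.ne')]
  · exact (intervalIntegrable_iff_integrableOn_Ioc_of_le hb).1
      ((by fun_prop : Continuous fun t : ℝ => d * t ^ (d - 1)).intervalIntegrable _ _)
  · filter_upwards [ae_restrict_mem measurableSet_Ioc] with t ht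
    exact mul_nonneg d.cast_nonneg (pow_nonneg ht.1.le _)

theorem radialMeasure_Iio {d : ℕ} (hd : 0 < d) (a : ℝ) :
    radialMeasure d (Iio a) = ENNReal.ofReal (max 0 (min a 1) ^ d) := by
  have hIoo : Iio a ∩ Ioo 0 1 = Ioo 0 (max 0 (min a 1)) := by
    ext t
    simp only [mem_inter_iff, mem_Iio, mem_Ioo, lt_max_iff, lt_min_iff]
    constructor
    · rintro ⟨hta, ht0, ht1⟩
      exact ⟨ht0, Or.inr ⟨hta, ht1⟩⟩
    · rintro ⟨ht0, ht | ⟨hta, ht1⟩⟩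
      exacts [absurd ht (lt_asymm ht0), ⟨hta, ht0, ht1⟩]
  rw [radialMeasure, withDensity_apply _ measurableSet_Iio,
    Measure.restrict_restrict measurableSet_Iio, hIoo,
    lintegral_Ioo_natCast_mul_pow_pred hd (le_max_left _ _)]

instance {d : ℕ} [NeZero d] : IsProbabilityMeasure (radialMeasure d) := by
  constructor
  rw [radialMeasure, withDensity_apply _ MeasurableSet.univ, Measure.restrict_univ,
    lintegral_Ioo_natCast_mul_pow_pred (Nat.pos_of_neZero d) zero_le_one, one_pow,
    ENNReal.ofReal_one]

section Gauge

variable {E : Type*} [NormedAddCommGroup E] [NormedSpace ℝ E] {Ω : Set E}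

theorem setOf_gauge_lt_eq_smul (hΩo : IsOpen Ω) (hΩc : Convex ℝ Ω) (h0 : (0 : E) ∈ Ω)
    {r : ℝ} (hr : 0 < r) : {x | gauge Ω x < r} = r • Ω := by
  ext x
  rw [mem_smul_set_iff_inv_smul_mem₀ hr.ne',
    ← Set.ext_iff.1 (setOfPred_gauge_lt_one_eq_self_of_isOpen hΩc h0 hΩo) _]
  simp [gauge_smul_of_nonneg (inv_nonneg.2 hr.le), inv_mul_lt_iff₀ hr]

variable [FiniteDimensional ℝ E] [MeasurableSpace E] [BorelSpace E] (μ : Measure E)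
  [μ.IsAddHaarMeasure]

theorem addHaar_setOf_gauge_lt (hΩo : IsOpen Ω) (hΩc : Convex ℝ Ω) (h0 : (0 : E) ∈ Ω)
    {r : ℝ} (hr : 0 < r) :
    μ {x | gauge Ω x < r} = ENNReal.ofReal (r ^ finrank ℝ E) * μ Ω := by
  rw [setOf_gauge_lt_eq_smul hΩo hΩc h0 hr, μ.addHaar_smul_of_nonneg hr.le]

theorem map_gauge_restrict [Nontrivial E] (hΩo : IsOpen Ω) (hΩc : Convex ℝ Ω) (h0 : (0 : E) ∈ Ω)
    (hΩ : μ Ω ≠ ∞) : (μ.restrict Ω).map (gauge Ω) = μ Ω • radialMeasure (finrank ℝ E) := by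
  have hd : 0 < finrank ℝ E := finrank_pos
  have hg : Continuous (gauge Ω) := continuous_gauge hΩc (hΩo.mem_nhds h0)
  have hΩ1 := setOfPred_gauge_lt_one_eq_self_of_isOpen hΩc h0 hΩo
  have := isFiniteMeasure_restrict.2 hΩ
  refine ext_of_generate_finite _ (BorelSpace.measurable_eq.trans (borel_eq_generateFrom_Iio ℝ))
    isPiSystem_Iio ?_ ?_
  · rintro _ ⟨a, rfl⟩
    have hpre : gauge Ω ⁻¹' Iio a ∩ Ω = {x | gauge Ω x < min a 1} := by
      ext x
      rw [mem_inter_iff, ← Set.ext_iff.1 hΩ1 x]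
      simp
    rw [Measure.map_apply hg.measurable measurableSet_Iio,
      Measure.restrict_apply (hg.measurable measurableSet_Iio), hpre, Measure.smul_apply,
      radialMeasure_Iio hd, smul_eq_mul]
    rcases le_or_gt (min a 1) 0 with h | h
    · have hempty : {x | gauge Ω x < min a 1} = ∅ :=
        eq_empty_of_forall_notMem fun x hx => (gauge_nonneg x).not_gt (lt_of_lt_of_le hx h)
      rw [hempty, max_eq_left h, zero_pow hd.ne', ENNReal.ofReal_zero, measure_empty, mul_zero]
    · rw [addHaar_setOf_gauge_lt μ hΩo hΩc h0 h, max_eq_right h.le, mul_comm]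
  · rw [Measure.map_apply hg.measurable MeasurableSet.univ, preimage_univ,
      Measure.restrict_apply_univ, Measure.smul_apply]
    have : NeZero (finrank ℝ E) := ⟨hd.ne'⟩
    rw [measure_univ, smul_eq_mul, mul_one]

theorem setIntegral_comp_gauge [Nontrivial E] (hΩo : IsOpen Ω) (hΩc : Convex ℝ Ω)
    (h0 : (0 : E) ∈ Ω) (hΩ : μ Ω ≠ ∞) {g : ℝ → ℝ}
    (hg : AEStronglyMeasurable g (volume.restrict (Ioo 0 1))) :
    ∫ x in Ω, g (gauge Ω x) ∂μ =
      finrank ℝ E * (μ Ω).toReal * ∫ t in (0 : ℝ)..1, g t * t ^ (finrank ℝ E - 1) := by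
  have hmap := map_gauge_restrict μ hΩo hΩc h0 hΩ
  have hg' : AEStronglyMeasurable g ((μ.restrict Ω).map (gauge Ω)) := by
    rw [hmap]
    exact (hg.mono_ac (withDensity_absolutelyContinuous _ _)).smul_measure _
  rw [← integral_map (continuous_gauge hΩc (hΩo.mem_nhds h0)).aemeasurable hg', hmap,
    integral_smul_measure, radialMeasure,
    integral_withDensity_eq_integral_toReal_smul (by fun_prop)
      (.of_forall fun _ => ENNReal.ofReal_lt_top),
    intervalIntegral.integral_of_le zero_le_one, integral_Ioc_eq_integral_Ioo, smul_eq_mul]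
  simp_rw [← integral_const_mul]
  refine setIntegral_congr_fun measurableSet_Ioo fun t ht => ?_
  rw [ENNReal.toReal_ofReal (by have := ht.1; positivity), smul_eq_mul]
  ring

theorem integrableOn_comp_gauge [Nontrivial E] (hΩo : IsOpen Ω) (hΩc : Convex ℝ Ω)
    (h0 : (0 : E) ∈ Ω) (hΩ : μ Ω ≠ ∞) {g : ℝ → ℝ}
    (hg : AEStronglyMeasurable g (volume.restrict (Ioo 0 1))) {C : ℝ}
    (hC : ∀ t ∈ Ioo (0 : ℝ) 1, ‖g t‖ ≤ C) :
    IntegrableOn (fun x => g (gauge Ω x)) Ω μ := by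
  have hmap := map_gauge_restrict μ hΩo hΩc h0 hΩ
  have hac : radialMeasure (finrank ℝ E) ≪ volume.restrict (Ioo 0 1) :=
    withDensity_absolutelyContinuous _ _
  have hg' : AEStronglyMeasurable g ((μ.restrict Ω).map (gauge Ω)) := by
    rw [hmap]
    exact (hg.mono_ac hac).smul_measure _
  refine (integrable_map_measure hg'
    (continuous_gauge hΩc (hΩo.mem_nhds h0)).aemeasurable).1 ?_
  rw [hmap]
  have : NeZero (finrank ℝ E) := ⟨finrank_pos.ne'⟩
  exact (Integrable.of_bound (hg.mono_ac hac) C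
    (hac.ae_le (ae_restrict_of_forall_mem measurableSet_Ioo hC))).smul_measure hΩ

theorem ae_restrict_gauge_mem_Ioo [Nontrivial E] (hΩo : IsOpen Ω) (hΩc : Convex ℝ Ω)
    (h0 : (0 : E) ∈ Ω) (hΩ : μ Ω ≠ ∞) : ∀ᵐ x ∂μ.restrict Ω, gauge Ω x ∈ Ioo 0 1 := by
  refine ae_of_ae_map (continuous_gauge hΩc (hΩo.mem_nhds h0)).aemeasurable ?_
  rw [map_gauge_restrict μ hΩo hΩc h0 hΩ]
  exact Measure.ae_smul_measure ((withDensity_absolutelyContinuous _ _).ae_le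
    (ae_restrict_mem measurableSet_Ioo)) _

end Gauge

theorem ContDiffOn.exists_bound_deriv_Ioo {F : Type*} [NormedAddCommGroup F] [NormedSpace ℝ F]
    {f : ℝ → F} {a b : ℝ} (hab : a < b) (hf : ContDiffOn ℝ 1 f (Icc a b)) :
    ∃ C, ∀ t ∈ Ioo a b, ‖deriv f t‖ ≤ C := by
  obtain ⟨C, hC⟩ := isCompact_Icc.exists_bound_of_continuousOn
    (hf.continuousOn_derivWithin (uniqueDiffOn_Icc hab) le_rfl)
  refine ⟨C, fun t ht => ?_⟩
  rw [← derivWithin_of_mem_nhds (Icc_mem_nhds ht.1 ht.2)]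
  exact hC t (Ioo_subset_Icc_self ht)

theorem norm_gradient_comp_le_of_lipschitzWith {F : Type*} [NormedAddCommGroup F]
    [InnerProductSpace ℝ F] [CompleteSpace F] {φ : F → ℝ} {K : ℝ≥0} (hφ : LipschitzWith K φ)
    {f : ℝ → ℝ} {x : F} (hf : DifferentiableAt ℝ f (φ x)) (hφx : DifferentiableAt ℝ φ x) :
    ‖gradient (fun y => f (φ y)) x‖ ≤ |deriv f (φ x)| * K := by
  have hcomp : HasFDerivAt (fun y => f (φ y)) (deriv f (φ x) • fderiv ℝ φ x) x :=
    hf.hasDerivAt.comp_hasFDerivAt x hφx.hasFDerivAt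
  rw [← (InnerProductSpace.toDual ℝ F).norm_map, toDual_gradient, hcomp.fderiv, norm_smul,
    Real.norm_eq_abs]
  exact mul_le_mul_of_nonneg_left (norm_fderiv_le_of_lipschitz ℝ hφ) (abs_nonneg _)

section InnerProductSpace

variable {F : Type*} [NormedAddCommGroup F] [InnerProductSpace ℝ F] [FiniteDimensional ℝ F]
  [MeasurableSpace F] [BorelSpace F] [Nontrivial F] (μ : Measure F) [μ.IsAddHaarMeasure]
  {Ω : Set F}

theorem ae_norm_gradient_comp_gauge_le (hΩo : IsOpen Ω) (hΩc : Convex ℝ Ω) (hΩ : μ Ω ≠ ∞)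
    {R : ℝ} (hR : 0 < R) (hball : ball 0 R ⊆ Ω) {f : ℝ → ℝ}
    (hf : ∀ t ∈ Ioo (0 : ℝ) 1, DifferentiableAt ℝ f t) :
    ∀ᵐ x ∂μ.restrict Ω, ‖gradient (fun y => f (gauge Ω y)) x‖ ≤ |deriv f (gauge Ω x)| / R := by
  have hlip : LipschitzWith (⟨R, hR.le⟩ : ℝ≥0)⁻¹ (gauge Ω) := hΩc.lipschitzWith_gauge hR hball
  filter_upwards [ae_restrict_of_ae (hlip.ae_differentiableAt (μ := μ)),
    ae_restrict_gauge_mem_Ioo μ hΩo hΩc (hball (mem_ball_self hR)) hΩ] with x hx ht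
  exact norm_gradient_comp_le_of_lipschitzWith hlip (hf _ ht) hx

theorem integral_norm_gradient_comp_gauge_sq_le (hΩo : IsOpen Ω) (hΩc : Convex ℝ Ω)
    (hΩ : μ Ω ≠ ∞) {R : ℝ} (hR : 0 < R) (hball : ball 0 R ⊆ Ω) {f : ℝ → ℝ}
    (hf : ContDiffOn ℝ 1 f (Icc 0 1)) :
    ∫ x in Ω, ‖gradient (fun y => f (gauge Ω y)) x‖ ^ 2 ∂μ ≤
      finrank ℝ F * (μ Ω).toReal / R ^ 2 *
        ∫ t in (0 : ℝ)..1, deriv f t ^ 2 * t ^ (finrank ℝ F - 1) := by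
  have h0 : (0 : F) ∈ Ω := hball (mem_ball_self hR)
  have hmeas : AEStronglyMeasurable (fun t => deriv f t ^ 2) (volume.restrict (Ioo 0 1)) :=
    ((measurable_deriv f).pow_const 2).aestronglyMeasurable
  obtain ⟨C, hC⟩ := hf.exists_bound_deriv_Ioo zero_lt_one
  have hint : IntegrableOn (fun x => deriv f (gauge Ω x) ^ 2) Ω μ :=
    integrableOn_comp_gauge μ hΩo hΩc h0 hΩ hmeas (C := C ^ 2) fun t ht => by
      rw [norm_pow]
      exact pow_le_pow_left₀ (norm_nonneg _) (hC t ht) 2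
  have hbound := ae_norm_gradient_comp_gauge_le μ hΩo hΩc hΩ hR hball
    fun t ht => (hf.differentiableOn one_ne_zero t (Ioo_subset_Icc_self ht)).differentiableAt
      (Icc_mem_nhds ht.1 ht.2)
  calc ∫ x in Ω, ‖gradient (fun y => f (gauge Ω y)) x‖ ^ 2 ∂μ
      ≤ ∫ x in Ω, deriv f (gauge Ω x) ^ 2 / R ^ 2 ∂μ := by
        refine integral_mono_of_nonneg (.of_forall fun _ => by positivity) (hint.div_const _) ?_
        filter_upwards [hbound] with x hx
        rw [← sq_abs (deriv f _), ← div_pow]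
        exact pow_le_pow_left₀ (norm_nonneg _) hx 2
    _ = _ := by
        rw [integral_div, setIntegral_comp_gauge μ hΩo hΩc h0 hΩ hmeas]
        ring

end InnerProductSpace

theorem inradius_pos {N : ℕ} [Nontrivial (EuclideanSpace ℝ (Fin N))]
    {Ω : Set (EuclideanSpace ℝ (Fin N))} (hΩo : IsOpen Ω) (hΩb : Bornology.IsBounded Ω)
    {x : EuclideanSpace ℝ (Fin N)} (hx : x ∈ Ω) : 0 < inradius Ω := by
  obtain ⟨ε, hε, hεΩ⟩ := Metric.isOpen_iff.1 hΩo x hx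
  have hbdd : BddAbove {r : ℝ | ∃ y, ball y r ⊆ Ω} := by
    refine ⟨diam Ω, fun r ⟨y, hy⟩ => ?_⟩
    rcases le_or_gt r 0 with hr | hr
    · exact hr.trans diam_nonneg
    · have := (diam_ball_eq y hr.le).symm.trans_le (diam_mono hy hΩb)
      linarith
  exact hε.trans_le (le_csSup hbdd ⟨x, hεΩ⟩)

theorem stmt_17_general (N : ℕ) (hN : 2 ≤ N) (q : ℝ) (hq1 : 1 ≤ q)
    (Ω : Set (EuclideanSpace ℝ (Fin N)))
    (hΩopen : IsOpen Ω) (hΩbdd : Bornology.IsBounded Ω) (hΩconv : Convex ℝ Ω)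
    (h0 : (0 : EuclideanSpace ℝ (Fin N)) ∈ Ω)
    (hball : Metric.ball (0 : EuclideanSpace ℝ (Fin N)) (inradius Ω) ⊆ Ω)
    (f : ℝ → ℝ) (hf : ContDiffOn ℝ 1 f (Set.Icc 0 1)) :
    (∫ x in Ω, f (gauge Ω x) ^ q) =
        N * (volume Ω).toReal * ∫ t in (0:ℝ)..1, f t ^ q * t ^ (N - 1) ∧
      (∫ x in Ω, ‖gradient (fun y => f (gauge Ω y)) x‖ ^ 2) ≤
        N * (volume Ω).toReal / inradius Ω ^ 2 *
          ∫ t in (0:ℝ)..1, (deriv f t) ^ 2 * t ^ (N - 1) := by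
  have : Nontrivial (EuclideanSpace ℝ (Fin N)) :=
    Module.nontrivial_of_finrank_pos (by rw [finrank_euclideanSpace_fin]; omega)
  have hΩ : volume Ω ≠ ∞ := hΩbdd.measure_lt_top.ne
  have hR : 0 < inradius Ω := inradius_pos hΩopen hΩbdd h0
  have hfq : AEStronglyMeasurable (fun t => f t ^ q) (volume.restrict (Ioo 0 1)) :=
    ((hf.continuousOn.mono Ioo_subset_Icc_self).rpow_const
      fun _ _ => Or.inr (by linarith)).aestronglyMeasurable measurableSet_Ioo
  constructor
  · simpa only [finrank_euclideanSpace_fin] using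
      setIntegral_comp_gauge volume hΩopen hΩconv h0 hΩ hfq
  · simpa only [finrank_euclideanSpace_fin] using
      integral_norm_gradient_comp_gauge_sq_le volume hΩopen hΩconv hΩ hR hball hf

/-- Let `1 ≤ q < 2` and let `Ω ⊂ ℝ^N` be an open bounded convex set containing
the ball `B_{R_Ω}(0)`, where `R_Ω` is the inradius. Let `f : [0,1] → [0,∞)` be `C¹`, decreasing,
with `f 1 = 0`, and let `j_Ω = gauge Ω` be the Minkowski functional of `Ω`. Then
`∫_Ω f(j_Ω x)^q dx = N |Ω| ∫₀¹ f(t)^q t^(N-1) dt` and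
`∫_Ω |∇(f ∘ j_Ω)|² dx ≤ (N |Ω| / R_Ω²) ∫₀¹ f'(t)² t^(N-1) dt`. -/
theorem stmt_17 (N : ℕ) (hN : 2 ≤ N) (q : ℝ) (hq1 : 1 ≤ q) (hq2 : q < 2)
    (Ω : Set (EuclideanSpace ℝ (Fin N)))
    (hΩopen : IsOpen Ω) (hΩbdd : Bornology.IsBounded Ω) (hΩconv : Convex ℝ Ω)
    (h0 : (0 : EuclideanSpace ℝ (Fin N)) ∈ Ω)
    (hball : Metric.ball (0 : EuclideanSpace ℝ (Fin N)) (inradius Ω) ⊆ Ω)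
    (f : ℝ → ℝ) (hf : ContDiffOn ℝ 1 f (Set.Icc 0 1))
    (hfdec : StrictAntiOn f (Set.Icc 0 1)) (hfnn : ∀ t ∈ Set.Icc (0:ℝ) 1, 0 ≤ f t)
    (hf1 : f 1 = 0) :
    (∫ x in Ω, f (gauge Ω x) ^ q) =
        N * (volume Ω).toReal * ∫ t in (0:ℝ)..1, f t ^ q * t ^ (N - 1) ∧
      (∫ x in Ω, ‖gradient (fun y => f (gauge Ω y)) x‖ ^ 2) ≤
        N * (volume Ω).toReal / inradius Ω ^ 2 *
          ∫ t in (0:ℝ)..1, (deriv f t) ^ 2 * t ^ (N - 1) :=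
  stmt_17_general N hN q hq1 Ω hΩopen hΩbdd hΩconv h0 hball f hf
end
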